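/- Let n ≥ 5, Z_n(x,y,z,a) be the 4-perturbed reciprocal matrix with x,y,z,a > 0, and w its Perron eigenvector with eigenvalue r. If max{a,z} ≤ 1 and a ≠ z, then w_2 ≠ w_3; in particular, if w_3 ≥ w_2 then w_2/w_3 < 1, so the edges (3,2) and (2,3) cannot both be in G_{Z_n(x,y,z,a),w}. -/
import Mathlib


/-- The reciprocal matrix `Z_n(x,y,z,a)`: all entries equal to one except
(in 1-based indexing) `(1,n-1) = y`, `(1,n) = x`, `(2,n-1) = a`, `(2,n) = z`
and the reciprocals at the transposed positions. -/
noncomputable def Zmat (n : ℕ) (x y z a : ℝ) : Matrix (Fin n) (Fin n) ℝ :=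
  fun i j =>
    if i.val = 0 ∧ j.val = n - 2 then y
    else if i.val = 0 ∧ j.val = n - 1 then x
    else if i.val = 1 ∧ j.val = n - 2 then a
    else if i.val = 1 ∧ j.val = n - 1 then z
    else if i.val = n - 2 ∧ j.val = 0 then y⁻¹
    else if i.val = n - 1 ∧ j.val = 0 then x⁻¹
    else if i.val = n - 2 ∧ j.val = 1 then a⁻¹
    else if i.val = n - 1 ∧ j.val = 1 then z⁻¹
    else 1

/-- if `max {a, z} ≤ 1` and `a ≠ z`, then `w_2 ≠ w_3`; in particular
the edges (3,2) and (2,3) cannot both be in `G_{Z_n(x,y,z,a),w}`. -/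
theorem zmat_w2_ne_w3 (n : ℕ) (hn : 5 ≤ n) (x y z a : ℝ)
    (hx : 0 < x) (hy : 0 < y) (hz : 0 < z) (ha : 0 < a)
    (r : ℝ) (w : Fin n → ℝ) (hw : ∀ i, 0 < w i)
    (heig : (Zmat n x y z a).mulVec w = r • w)
    (ha1 : a ≤ 1) (hz1 : z ≤ 1) (hne : a ≠ z) :
    w ⟨1, by omega⟩ ≠ w ⟨2, by omega⟩ ∧
      ¬ ((1 : ℝ) ≤ w ⟨2, by omega⟩ / w ⟨1, by omega⟩ ∧
         (1 : ℝ) ≤ w ⟨1, by omega⟩ / w ⟨2, by omega⟩) := by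
  set i1 : Fin n := ⟨1, by omega⟩ with hi1
  set i2 : Fin n := ⟨2, by omega⟩ with hi2
  set k1 : Fin n := ⟨n - 2, by omega⟩ with hk1
  set k2 : Fin n := ⟨n - 1, by omega⟩ with hk2
  have h1 : ∑ j, Zmat n x y z a i1 j * w j = r * w i1 := by
    have := congrFun heig i1
    simpa [Matrix.mulVec, dotProduct] using this
  have h2 : ∑ j, Zmat n x y z a i2 j * w j = r * w i2 := by
    have := congrFun heig i2
    simpa [Matrix.mulVec, dotProduct] using this
  have key : r * w i1 - r * w i2 = (a - 1) * w k1 + (z - 1) * w k2 := by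
    rw [← h1, ← h2, ← Finset.sum_sub_distrib]
    have hsum : ∀ j : Fin n,
        Zmat n x y z a i1 j * w j - Zmat n x y z a i2 j * w j =
        (if j = k1 then (a - 1) * w j else 0) +
        (if j = k2 then (z - 1) * w j else 0) := by
      intro j
      by_cases hj1 : j = k1
      · subst hj1
        have e1 : Zmat n x y z a i1 k1 = a := by
          simp only [Zmat, hi1, hk1]
          norm_num
        have e2 : Zmat n x y z a i2 k1 = 1 := by
          simp only [Zmat, hi2, hk1]
          have : ¬ (2 = 0) := by omega
          have h2n2 : ¬ (2 = n - 2) := by omega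
          have h2n1 : ¬ (2 = n - 1) := by omega
          have hn20 : ¬ (n - 2 = 0) := by omega
          have hn21 : ¬ (n - 2 = 1) := by omega
          simp [this, h2n2, h2n1, hn20, hn21]
        have hne12 : k1 ≠ k2 := by simp [hk1, hk2, Fin.ext_iff]; omega
        rw [e1, e2]
        simp [hne12]
        ring
      · by_cases hj2 : j = k2
        · subst hj2
          have e1 : Zmat n x y z a i1 k2 = z := by
            simp only [Zmat, hi1, hk2]
            have hne' : ¬ (n - 1 = n - 2) := by omega
            simp [hne']
          have e2 : Zmat n x y z a i2 k2 = 1 := by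
            simp only [Zmat, hi2, hk2]
            have h2n2 : ¬ (2 = n - 2) := by omega
            have h2n1 : ¬ (2 = n - 1) := by omega
            have hn10 : ¬ (n - 1 = 0) := by omega
            have hn11 : ¬ (n - 1 = 1) := by omega
            simp [h2n2, h2n1, hn10, hn11]
          rw [e1, e2]
          simp [hj1]
          ring
        · have ej1 : j.val ≠ n - 2 := by
            intro h; exact hj1 (by simp [hk1, Fin.ext_iff, h])
          have ej2 : j.val ≠ n - 1 := by
            intro h; exact hj2 (by simp [hk2, Fin.ext_iff, h])
          have e1 : Zmat n x y z a i1 j = 1 := by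
            simp only [Zmat, hi1, Fin.val_mk]
            have : ¬ ((1:ℕ) = 0) := by omega
            have h1n2 : ¬ ((1:ℕ) = n - 2) := by omega
            have h1n1 : ¬ ((1:ℕ) = n - 1) := by omega
            simp [this, h1n2, h1n1, ej1, ej2]
          have e2 : Zmat n x y z a i2 j = 1 := by
            simp only [Zmat, hi2, Fin.val_mk]
            have : ¬ ((2:ℕ) = 0) := by omega
            have h2n2 : ¬ ((2:ℕ) = n - 2) := by omega
            have h2n1 : ¬ ((2:ℕ) = n - 1) := by omega
            simp [this, h2n2, h2n1, ej1, ej2]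
          rw [e1, e2]
          simp [hj1, hj2]
    rw [Finset.sum_congr rfl (fun j _ => hsum j), Finset.sum_add_distrib]
    rw [Finset.sum_ite_eq' Finset.univ k1 (fun j => (a - 1) * w j),
        Finset.sum_ite_eq' Finset.univ k2 (fun j => (z - 1) * w j)]
    simp
  have hwk1 := hw k1
  have hwk2 := hw k2
  have hmain : w i1 ≠ w i2 := by
    intro heq
    rw [heq] at key
    simp at key
    rcases lt_or_eq_of_le ha1 with h | h
    · nlinarith
    · have hzlt : z < 1 := lt_of_le_of_ne hz1 (fun hz2 => hne (h.trans hz2.symm))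
      nlinarith
  refine ⟨hmain, ?_⟩
  rintro ⟨hd1, hd2⟩
  have hle1 : w i1 ≤ w i2 := (one_le_div (hw i1)).mp hd1
  have hle2 : w i2 ≤ w i1 := (one_le_div (hw i2)).mp hd2
  exact hmain (le_antisymm hle1 hle2)
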